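/- Commutativity of the convolution on the cone X_q: Let q ≥ 1 be an integer and p > 2q−1 real. Then for all x, x' ∈ X_q and every continuous function f : X_q → ℂ, (δ_x *_p δ_{x'})(f) = (δ_{x'} *_p δ_x)(f). -/

import Mathlib

noncomputable section
open MeasureTheory Matrix
open scoped ComplexOrder

instance matMS (ι : Type*) : MeasurableSpace (Matrix ι ι ℂ) :=
  (inferInstance : MeasurableSpace (ι → ι → ℂ))

/-- Lebesgue measure on `M_q(ℂ) ≅ ℝ^{2q²}` -/
def lebM (q : ℕ) : Measure (Matrix (Fin q) (Fin q) ℂ) :=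
  (volume : Measure (Fin q → Fin q → ℂ)).map Matrix.of

/-- the closed matrix ball `B_q` -/
def Bq (q : ℕ) : Set (Matrix (Fin q) (Fin q) ℂ) :=
  {w | (1 - wᴴ * w).PosSemidef}

/-- `μ` is the normalized Haar measure of the compact group given by the set `G`. -/
structure IsHaarProb {ι : Type*} [Fintype ι] (G : Set (Matrix ι ι ℂ))
    (μ : Measure (Matrix ι ι ℂ)) : Prop where
  prob : IsProbabilityMeasure μ
  conc : μ G = 1
  invar : ∀ k ∈ G, μ.map (fun x => k * x) = μ

/-- argument with `arg 0 = 1` -/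
def carg (w : ℂ) : ℂ := if w = 0 then 1 else w / ‖w‖

/-- increasingly ordered singular values -/
def sigUp {q : ℕ} (X : Matrix (Fin q) (Fin q) ℂ) : Fin q → ℝ :=
  fun j => Real.sqrt
    (((Matrix.isHermitian_conjTranspose_mul_self X).eigenvalues ∘
      Tuple.sort (Matrix.isHermitian_conjTranspose_mul_self X).eigenvalues) j)

/-- the cone `X_q`, realized in `ℂ × ℝ^q` as the set of points
`[r, z] = (z r₁, r)` with `0 ≤ r₁ ≤ … ≤ r_q ≤ 1` and `z ∈ 𝕋`. -/
def XqSet (q : ℕ) : Set (ℂ × (Fin q → ℝ)) :=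
  {x | Monotone x.2 ∧ (∀ j, x.2 j ∈ Set.Icc (0:ℝ) 1) ∧
    ∀ h : 0 < q, ‖x.1‖ = x.2 ⟨0, h⟩}

/-- `cos t̲` written in terms of `r = cos t`. -/
def cMatr (q : ℕ) (r : Fin q → ℝ) : Matrix (Fin q) (Fin q) ℂ :=
  Matrix.diagonal fun j => (r j : ℂ)

/-- `sin t̲` written in terms of `r = cos t`, i.e. `sin t_j = √(1 − r_j²)`. -/
def sMatr (q : ℕ) (r : Fin q → ℝ) : Matrix (Fin q) (Fin q) ℂ :=
  Matrix.diagonal fun j => (Real.sqrt (1 - r j ^ 2) : ℂ)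

/-- `d(t,t';v,w) = − sin t̲ · w · sin t̲' + cos t̲ · v · cos t̲'` for `r = cos t`,
`r' = cos t'`. -/
def dMr (q : ℕ) (r r' : Fin q → ℝ) (v w : Matrix (Fin q) (Fin q) ℂ) :
    Matrix (Fin q) (Fin q) ℂ :=
  -(sMatr q r) * w * sMatr q r' + cMatr q r * v * cMatr q r'

/-- the point `[σ↑(d), z z' · arg det d] ∈ X_q` appearing in the convolution,
for `x = [r, z]`, `x' = [r', z']`. -/
def convPt (q : ℕ) (hq : 0 < q) (v w : Matrix (Fin q) (Fin q) ℂ)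
    (x x' : ℂ × (Fin q → ℝ)) : ℂ × (Fin q → ℝ) :=
  (carg x.1 * carg x'.1 * carg (dMr q x.2 x'.2 v w).det *
      (sigUp (dMr q x.2 x'.2 v w) ⟨0, hq⟩ : ℝ),
    sigUp (dMr q x.2 x'.2 v w))

/-- `κ_p = ∫_{B_q} det(1 − w*w)^{p−2q} dw` -/
def kapR (q : ℕ) (p : ℝ) : ℝ :=
  ∫ w in Bq q, ((1 - wᴴ * w).det.re) ^ (p - 2 * q) ∂lebM q

/-- the hypergroup convolution `(δ_x *_p δ_{x'})(f)` on `X_q`, where `ν` is the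
normalized Haar measure of `SU(q)`. -/
def convXq (q : ℕ) (hq : 0 < q) (p : ℝ)
    (ν : Measure (Matrix (Fin q) (Fin q) ℂ))
    (f : ℂ × (Fin q → ℝ) → ℂ) (x x' : ℂ × (Fin q → ℝ)) : ℂ :=
  ((kapR q p : ℝ) : ℂ)⁻¹ *
    ∫ w in Bq q, (∫ v, f (convPt q hq v w x x') ∂ν) *
      ((((1 - wᴴ * w).det.re) ^ (p - 2 * q) : ℝ) : ℂ) ∂lebM q

/-! Transposition exchanges the two arguments of the kernel: `d(t', t; v, w) = d(t, t'; vᵀ, wᵀ)ᵀ`,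
and both `σ↑` and `det` are invariant under transposition. Commutativity therefore reduces to the
invariance under `w ↦ wᵀ` of Lebesgue measure (a linear involution has determinant `±1`), of the
ball `B_q` (by the C⋆-identity, `1 - w*w ≥ 0 ↔ ‖w‖ ≤ 1 ↔ 1 - ww* ≥ 0`) and of the weight
(`det(1 - AB) = det(1 - BA)`), together with the invariance under `v ↦ vᵀ` of the Haar measure
of `SU(q)`: its image is a right-invariant probability measure, and by Fubini a left-invariant and
a right-invariant probability measure on a group coincide. -/

instance Matrix.secondCountableTopology (ι : Type*) [Fintype ι] :
    SecondCountableTopology (Matrix ι ι ℂ) :=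
  inferInstanceAs (SecondCountableTopology (ι → ι → ℂ))

instance Matrix.borelSpace (ι : Type*) [Fintype ι] : BorelSpace (Matrix ι ι ℂ) :=
  inferInstanceAs (BorelSpace (ι → ι → ℂ))

theorem MeasureTheory.Measure.eq_of_mul_left_invariant_of_mul_right_invariant
    {M : Type*} [Monoid M] [MeasurableSpace M] [MeasurableMul₂ M] {G : Set M}
    (hG : MeasurableSet G) {μ ν : Measure M} [IsProbabilityMeasure μ] [IsProbabilityMeasure ν]
    (hμG : μ G = 1) (hνG : ν G = 1)
    (hμ : ∀ k ∈ G, μ.map (k * ·) = μ) (hν : ∀ k ∈ G, ν.map (· * k) = ν) : μ = ν := by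
  ext s hs
  have hS : MeasurableSet {p : M × M | p.1 * p.2 ∈ s} := measurable_mul hs
  have haeμ : ∀ᵐ v ∂μ, v ∈ G := (prob_compl_eq_zero_iff hG).mpr hμG
  have haeν : ∀ᵐ u ∂ν, u ∈ G := (prob_compl_eq_zero_iff hG).mpr hνG
  calc μ s = ∫⁻ u, μ ((u * ·) ⁻¹' s) ∂ν := by
        rw [lintegral_congr_ae (g := fun _ => μ s), lintegral_const, measure_univ, mul_one]
        filter_upwards [haeν] with u hu
        rw [← Measure.map_apply (measurable_const_mul u) hs, hμ u hu]
    _ = (ν.prod μ) {p | p.1 * p.2 ∈ s} := (Measure.prod_apply hS).symm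
    _ = ∫⁻ v, ν ((· * v) ⁻¹' s) ∂μ := Measure.prod_apply_symm hS
    _ = ν s := by
        rw [lintegral_congr_ae (g := fun _ => ν s), lintegral_const, measure_univ, mul_one]
        filter_upwards [haeμ] with v hv
        rw [← Measure.map_apply (measurable_mul_const v) hs, hν v hv]

theorem MeasureTheory.Measure.IsAddHaarMeasure.measurePreserving_of_involutive
    {E : Type*} [NormedAddCommGroup E] [NormedSpace ℝ E] [MeasurableSpace E] [BorelSpace E]
    [FiniteDimensional ℝ E] (μ : Measure E) [μ.IsAddHaarMeasure] (f : E →ₗ[ℝ] E)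
    (hf : f ∘ₗ f = LinearMap.id) : MeasurePreserving f μ μ := by
  have hdet : LinearMap.det f * LinearMap.det f = 1 := by
    rw [← LinearMap.det_comp, hf, LinearMap.det_id]
  have habs : |(LinearMap.det f)⁻¹| = 1 := by
    have h := abs_mul (LinearMap.det f) (LinearMap.det f)
    rw [hdet, abs_one, eq_comm, mul_self_eq_one_iff] at h
    rw [abs_inv, inv_eq_one]
    exact h.resolve_right (by linarith [abs_nonneg (LinearMap.det f)])
  refine ⟨f.continuous_of_finiteDimensional.measurable, ?_⟩
  rw [Measure.map_linearMap_addHaar_eq_smul_addHaar μ (left_ne_zero_of_mul_eq_one hdet), habs,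
    ENNReal.ofReal_one, one_smul]

namespace Matrix

def transposeMeasurableEquiv (ι : Type*) [Fintype ι] : Matrix ι ι ℂ ≃ᵐ Matrix ι ι ℂ :=
  MeasurableEquiv.ofInvolutive transpose transpose_transpose
    continuous_id.matrix_transpose.measurable

variable {ι : Type*} [Fintype ι]

theorem transpose_mem_specialUnitaryGroup_iff {α : Type*} [CommRing α] [StarRing α]
    [DecidableEq ι] {A : Matrix ι ι α} :
    Aᵀ ∈ specialUnitaryGroup ι α ↔ A ∈ specialUnitaryGroup ι α := by
  rw [mem_specialUnitaryGroup_iff, mem_specialUnitaryGroup_iff, transpose_mem_unitaryGroup_iff,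
    det_transpose]

open scoped MatrixOrder Matrix.Norms.L2Operator in
theorem posSemidef_one_sub_conjTranspose_mul_self_iff [DecidableEq ι] (w : Matrix ι ι ℂ) :
    (1 - wᴴ * w).PosSemidef ↔ (1 - w * wᴴ).PosSemidef := by
  rw [← le_iff, ← le_iff, ← star_eq_conjTranspose,
    ← CStarAlgebra.norm_le_one_iff_of_nonneg _ (star_mul_self_nonneg w),
    ← CStarAlgebra.norm_le_one_iff_of_nonneg _ (mul_star_self_nonneg w),
    CStarRing.norm_star_mul_self, CStarRing.norm_self_mul_star]

theorem one_sub_conjTranspose_mul_self_transpose {α : Type*} [CommRing α] [StarRing α]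
    [DecidableEq ι] (w : Matrix ι ι α) :
    1 - wᵀᴴ * wᵀ = (1 - w * wᴴ)ᵀ := by
  rw [transpose_sub, transpose_one, transpose_mul, transpose_conjTranspose,
    conjTranspose_transpose]

end Matrix

open Matrix

theorem sigUp_transpose {n : ℕ} (X : Matrix (Fin n) (Fin n) ℂ) : sigUp Xᵀ = sigUp X := by
  have h : (isHermitian_conjTranspose_mul_self Xᵀ).eigenvalues
      = (isHermitian_conjTranspose_mul_self X).eigenvalues := by
    rw [IsHermitian.eigenvalues_eq_eigenvalues_iff, transpose_conjTranspose,
      ← conjTranspose_transpose, ← transpose_mul, charpoly_transpose, charpoly_mul_comm]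
  unfold sigUp
  rw [h]

theorem dMr_transpose (q : ℕ) (r r' : Fin q → ℝ) (v w : Matrix (Fin q) (Fin q) ℂ) :
    (dMr q r r' v w)ᵀ = dMr q r' r vᵀ wᵀ := by
  simp only [dMr, sMatr, cMatr, transpose_add, transpose_mul, transpose_neg, diagonal_transpose,
    neg_mul, Matrix.mul_assoc]

theorem convPt_swap (q : ℕ) (hq : 0 < q) (v w : Matrix (Fin q) (Fin q) ℂ)
    (x x' : ℂ × (Fin q → ℝ)) : convPt q hq v w x' x = convPt q hq vᵀ wᵀ x x' := by
  have hd : dMr q x'.2 x.2 v w = (dMr q x.2 x'.2 vᵀ wᵀ)ᵀ := by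
    rw [dMr_transpose, transpose_transpose, transpose_transpose]
  rw [convPt, convPt, hd, sigUp_transpose, det_transpose, mul_comm (carg x'.1)]

theorem transpose_mem_Bq_iff (q : ℕ) (w : Matrix (Fin q) (Fin q) ℂ) : wᵀ ∈ Bq q ↔ w ∈ Bq q := by
  rw [Bq, Set.mem_ofPred_eq, Set.mem_ofPred_eq, one_sub_conjTranspose_mul_self_transpose,
    posSemidef_transpose_iff, posSemidef_one_sub_conjTranspose_mul_self_iff]

theorem det_one_sub_conjTranspose_mul_self_transpose (q : ℕ) (w : Matrix (Fin q) (Fin q) ℂ) :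
    (1 - wᵀᴴ * wᵀ).det = (1 - wᴴ * w).det := by
  rw [one_sub_conjTranspose_mul_self_transpose, det_transpose, det_one_sub_mul_comm]

theorem lebM_measurePreserving_transpose (q : ℕ) :
    MeasurePreserving (transposeMeasurableEquiv (Fin q)) (lebM q) (lebM q) := by
  have hlebM : lebM q = (volume : Measure (Fin q → Fin q → ℂ)) := Measure.map_id
  -- instance search gives up on the nested product
  have : (volume : Measure (Fin q → Fin q → ℂ)).IsAddHaarMeasure := Measure.pi.isAddHaarMeasure _
  rw [hlebM]
  exact Measure.IsAddHaarMeasure.measurePreserving_of_involutive volume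
    ((transposeLinearEquiv (Fin q) (Fin q) ℝ ℂ).toLinearMap :
      (Fin q → Fin q → ℂ) →ₗ[ℝ] (Fin q → Fin q → ℂ))
    (LinearMap.ext fun m => transpose_transpose (Matrix.of m))

theorem setIntegral_Bq_transpose (q : ℕ) (G : Matrix (Fin q) (Fin q) ℂ → ℂ) :
    ∫ w in Bq q, G wᵀ ∂lebM q = ∫ w in Bq q, G w ∂lebM q := by
  have hpre : transposeMeasurableEquiv (Fin q) ⁻¹' Bq q = Bq q :=
    Set.ext (transpose_mem_Bq_iff q)
  rw [← (lebM_measurePreserving_transpose q).setIntegral_preimage_emb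
    (transposeMeasurableEquiv (Fin q)).measurableEmbedding, hpre]
  rfl

theorem IsHaarProb.measurePreserving_transpose {ι : Type*} [Fintype ι] [DecidableEq ι]
    {ν : Measure (Matrix ι ι ℂ)} (hν : IsHaarProb {A | A ∈ specialUnitaryGroup ι ℂ} ν) :
    MeasurePreserving (transposeMeasurableEquiv ι) ν ν := by
  set T := transposeMeasurableEquiv ι
  have hG : MeasurableSet {A : Matrix ι ι ℂ | A ∈ specialUnitaryGroup ι ℂ} :=
    (isClosed_unitary.inter (isClosed_singleton.preimage continuous_id.matrix_det)).measurableSet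
  have hTG : T ⁻¹' {A | A ∈ specialUnitaryGroup ι ℂ} = {A | A ∈ specialUnitaryGroup ι ℂ} :=
    Set.ext fun _ => transpose_mem_specialUnitaryGroup_iff (α := ℂ)
  have := hν.prob
  have := Measure.isProbabilityMeasure_map (μ := ν) T.measurable.aemeasurable
  refine ⟨T.measurable, (Measure.eq_of_mul_left_invariant_of_mul_right_invariant hG hν.conc
    ?_ hν.invar fun k hk => ?_).symm⟩
  · rw [Measure.map_apply T.measurable hG, hTG, hν.conc]
  · have hcomm : (· * k) ∘ T = T ∘ (kᵀ * ·) := funext fun A => by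
      change Aᵀ * k = (kᵀ * A)ᵀ
      rw [transpose_mul, transpose_transpose]
    rw [Measure.map_map (measurable_mul_const k) T.measurable, hcomm,
      ← Measure.map_map T.measurable (measurable_const_mul _),
      hν.invar _ ((transpose_mem_specialUnitaryGroup_iff (α := ℂ)).mpr hk)]

theorem IsHaarProb.integral_transpose {ι : Type*} [Fintype ι] [DecidableEq ι]
    {ν : Measure (Matrix ι ι ℂ)} (hν : IsHaarProb {A | A ∈ specialUnitaryGroup ι ℂ} ν)
    (F : Matrix ι ι ℂ → ℂ) : ∫ v, F vᵀ ∂ν = ∫ v, F v ∂ν :=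
  hν.measurePreserving_transpose.integral_comp' F

theorem convXq_comm_general (q : ℕ) (hq : 0 < q) (p : ℝ)
    (ν : Measure (Matrix (Fin q) (Fin q) ℂ))
    (hν : IsHaarProb {A | A ∈ Matrix.specialUnitaryGroup (Fin q) ℂ} ν)
    (f : ℂ × (Fin q → ℝ) → ℂ)
    (x : ℂ × (Fin q → ℝ))
    (x' : ℂ × (Fin q → ℝ)) :
    convXq q hq p ν f x x' = convXq q hq p ν f x' x := by
  set Φ : ℂ × (Fin q → ℝ) → ℂ × (Fin q → ℝ) → Matrix (Fin q) (Fin q) ℂ → ℂ :=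
    fun y y' w => (∫ v, f (convPt q hq v w y y') ∂ν) *
      ((((1 - wᴴ * w).det.re) ^ (p - 2 * q) : ℝ) : ℂ)
  have hΦ : ∀ w, Φ x' x w = Φ x x' wᵀ := fun w => by
    simp only [Φ, convPt_swap q hq _ w, hν.integral_transpose fun v => f (convPt q hq v wᵀ x x'),
      det_one_sub_conjTranspose_mul_self_transpose]
  change _ * ∫ w in Bq q, Φ x x' w ∂lebM q = _ * ∫ w in Bq q, Φ x' x w ∂lebM q
  simp_rw [hΦ, setIntegral_Bq_transpose]

/-- **Commutativity of the convolution on the cone `X_q`** for real `p > 2q−1`. -/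
theorem convXq_comm (q : ℕ) (hq : 0 < q) (p : ℝ) (hp : 2 * q - 1 < p)
    (ν : Measure (Matrix (Fin q) (Fin q) ℂ))
    (hν : IsHaarProb {A | A ∈ Matrix.specialUnitaryGroup (Fin q) ℂ} ν)
    (f : ℂ × (Fin q → ℝ) → ℂ) (hf : ContinuousOn f (XqSet q))
    (x : ℂ × (Fin q → ℝ)) (hx : x ∈ XqSet q)
    (x' : ℂ × (Fin q → ℝ)) (hx' : x' ∈ XqSet q) :
    convXq q hq p ν f x x' = convXq q hq p ν f x' x :=
  convXq_comm_general q hq p ν hν f x x'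

end
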